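/- Let Q be the linear order of the rationals with a constant symbol for each element. Then every nontrivial filter power Q^X/F of Q (over a wellfounded forest X with proper filter F) has no greatest element. -/

import Mathlib

/-!
Bonding maps of an ordered system of copies of `ℚ` fix every constant, hence are the identity,
so the pointwise successor `a + 1` of a compatible family `a` is again compatible. The
relation `a + 1 ≤ a` holds in the filter power exactly when the set of indices where it
holds pointwise belongs to the filter; that set is empty, and the filter is proper.
-/

namespace PosLogic

open FirstOrder FirstOrder.Language FirstOrder.Language.Structure Set

universe u v w x y z

variable {L : FirstOrder.Language.{u, v}}

/-- Positive formulas: built from atomic formulas and `⊥` using `∧`, `∨` and `∃`. -/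
inductive PosFormula (L : FirstOrder.Language.{u, v}) (α : Type y) : ℕ → Type (max u v y)
  | falsum {n : ℕ} : PosFormula L α n
  | equal {n : ℕ} (t₁ t₂ : L.Term (α ⊕ Fin n)) : PosFormula L α n
  | rel {n l : ℕ} (R : L.Relations l) (ts : Fin l → L.Term (α ⊕ Fin n)) : PosFormula L α n
  | and {n : ℕ} (φ ψ : PosFormula L α n) : PosFormula L α n
  | or {n : ℕ} (φ ψ : PosFormula L α n) : PosFormula L α n
  | ex {n : ℕ} (φ : PosFormula L α (n + 1)) : PosFormula L α n

variable {α : Type y}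

/-- Realization (satisfaction) of a positive formula. -/
def PosFormula.Realize {M : Type w} [L.Structure M] :
    ∀ {n : ℕ}, PosFormula L α n → (α → M) → (Fin n → M) → Prop
  | _, .falsum, _, _ => False
  | _, .equal t₁ t₂, v, xs => t₁.realize (Sum.elim v xs) = t₂.realize (Sum.elim v xs)
  | _, .rel R ts, v, xs => RelMap R fun i => (ts i).realize (Sum.elim v xs)
  | _, .and φ ψ, v, xs => φ.Realize v xs ∧ ψ.Realize v xs
  | _, .or φ ψ, v, xs => φ.Realize v xs ∨ ψ.Realize v xs
  | _, .ex φ, v, xs => ∃ a, φ.Realize v (Fin.snoc xs a)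

/-- Positive sentences. -/
abbrev PosSentence (L : FirstOrder.Language.{u, v}) : Type (max u v) := PosFormula L Empty 0

/-- A positive sentence holds in a structure. -/
def PosSentence.Realize (M : Type w) [L.Structure M] (φ : PosSentence L) : Prop :=
  PosFormula.Realize (M := M) φ Empty.elim (fun i => i.elim0)

/-- Two structures are positively equivalent when they satisfy the same positive sentences. -/
def PosEquivalent (M : Type w) (N : Type x) [L.Structure M] [L.Structure N] : Prop :=
  ∀ φ : PosSentence L, PosSentence.Realize M φ ↔ PosSentence.Realize N φ

/-- A filter over a poset: a nonempty collection of upsets, upward closed among upsets and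
closed under binary intersections. -/
structure PosetFilter (X : Type x) [Preorder X] where
  sets : Set (Set X)
  upper' : ∀ V ∈ sets, IsUpperSet V
  nonempty' : sets.Nonempty
  mono' : ∀ V ∈ sets, ∀ W : Set X, IsUpperSet W → V ⊆ W → W ∈ sets
  inter' : ∀ V ∈ sets, ∀ W ∈ sets, V ∩ W ∈ sets

/-- A prime filter over a poset. -/
def PosetFilter.Prime {X : Type x} [Preorder X] (F : PosetFilter X) : Prop :=
  ∅ ∉ F.sets ∧ ∀ V W : Set X, IsUpperSet V → IsUpperSet W →
    V ∪ W ∈ F.sets → V ∈ F.sets ∨ W ∈ F.sets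

/-- Predicate version: `S` is a filter over the poset `X`. -/
def IsPosetFilter {X : Type x} [Preorder X] (S : Set (Set X)) : Prop :=
  (∀ V ∈ S, IsUpperSet V) ∧ S.Nonempty ∧
    (∀ V ∈ S, ∀ W : Set X, IsUpperSet W → V ⊆ W → W ∈ S) ∧
    (∀ V ∈ S, ∀ W ∈ S, V ∩ W ∈ S)

/-- Predicate version: `S` is a prime filter over the poset `X`. -/
def IsPrimePosetFilter {X : Type x} [Preorder X] (S : Set (Set X)) : Prop :=
  IsPosetFilter S ∧ ∅ ∉ S ∧ ∀ V W : Set X, IsUpperSet V → IsUpperSet W →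
    V ∪ W ∈ S → V ∈ S ∨ W ∈ S

/-- A wellfounded forest: a poset whose principal downsets are well ordered. -/
def IsWellFoundedForest (X : Type x) [Preorder X] : Prop :=
  ∀ a : X, IsWellOrder (Set.Iic a) (· < ·)

/-- An ordered system of structures indexed by a poset. -/
structure OrderedSystem (L : FirstOrder.Language.{u, v}) (X : Type x) [Preorder X]
    (M : X → Type w) [∀ a, L.Structure (M a)] where
  hom : ∀ ⦃a b : X⦄, a ≤ b → M a →[L] M b
  hom_id : ∀ (a : X) (m : M a), hom (le_refl a) m = m
  hom_comp : ∀ ⦃a b c : X⦄ (hab : a ≤ b) (hbc : b ≤ c) (m : M a),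
    hom hbc (hom hab m) = hom (hab.trans hbc) m

variable {X : Type x} [PartialOrder X] {M : X → Type w} [∀ a, L.Structure (M a)]

/-- A compatible family in `S_F`: an element of `S_V` for some `V ∈ F`. -/
structure CompFam (D : OrderedSystem L X M) (F : PosetFilter X) where
  dom : Set X
  dom_mem : dom ∈ F.sets
  val : ∀ a ∈ dom, M a
  compat : ∀ ⦃b c : X⦄ (hb : b ∈ dom) (hc : c ∈ dom) (hbc : b ≤ c),
    D.hom hbc (val b hb) = val c hc

variable {D : OrderedSystem L X M} {F : PosetFilter X}

/-- The set `⟦a = b⟧`. -/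
def eqSet (a b : CompFam D F) : Set X :=
  {p | ∃ (ha : p ∈ a.dom) (hb : p ∈ b.dom), a.val p ha = b.val p hb}

theorem eqSet_upper (a b : CompFam D F) : IsUpperSet (eqSet a b) := by
  rintro p q hpq ⟨ha, hb, he⟩
  have hap := F.upper' _ a.dom_mem hpq ha
  have hbp := F.upper' _ b.dom_mem hpq hb
  exact ⟨hap, hbp, by rw [← a.compat ha hap hpq, ← b.compat hb hbp hpq, he]⟩

/-- The relation `≡_F`. -/
instance CompFam.setoid (D : OrderedSystem L X M) (F : PosetFilter X) :
    Setoid (CompFam D F) where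
  r a b := eqSet a b ∈ F.sets
  iseqv := by
    constructor
    · intro a
      exact F.mono' _ a.dom_mem _ (eqSet_upper a a) (fun p hp => ⟨hp, hp, rfl⟩)
    · intro a b h
      refine F.mono' _ h _ (eqSet_upper b a) ?_
      rintro p ⟨ha, hb, he⟩
      exact ⟨hb, ha, he.symm⟩
    · intro a b c hab hbc
      refine F.mono' _ (F.inter' _ hab _ hbc) _ (eqSet_upper a c) ?_
      rintro p ⟨⟨ha, hb, h1⟩, hb', hc, h2⟩
      exact ⟨ha, hc, h1.trans h2⟩

theorem PosetFilter.univ_mem (F : PosetFilter X) : Set.univ ∈ F.sets := by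
  obtain ⟨V, hV⟩ := F.nonempty'
  exact F.mono' _ hV _ isUpperSet_univ (Set.subset_univ V)

theorem PosetFilter.iInter_mem (F : PosetFilter X) :
    ∀ {n : ℕ} (s : Fin n → Set X), (∀ i, s i ∈ F.sets) → (⋂ i, s i) ∈ F.sets := by
  intro n
  induction n with
  | zero =>
    intro s _
    rw [Set.iInter_of_empty]
    exact F.univ_mem
  | succ k ih =>
    intro s hs
    have he : (⋂ i, s i) = s 0 ∩ ⋂ i : Fin k, s i.succ := by
      ext p
      simp only [Set.mem_iInter, Set.mem_inter_iff, Fin.forall_fin_succ]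
    rw [he]
    exact F.inter' _ (hs 0) _ (ih _ fun i => hs i.succ)

/-- Pointwise application of a function symbol to compatible families. -/
def CompFam.app {n : ℕ} (g : L.Functions n) (a : Fin n → CompFam D F) : CompFam D F where
  dom := ⋂ i, (a i).dom
  dom_mem := F.iInter_mem _ fun i => (a i).dom_mem
  val p hp := funMap g fun i => (a i).val p (Set.mem_iInter.1 hp i)
  compat := by
    intro b c hb hc hbc
    rw [Hom.map_fun]
    congr 1
    funext i
    exact (a i).compat _ _ hbc

/-- The set `⟦R(a₁, …, aₙ)⟧`. -/
def relSet {n : ℕ} (R : L.Relations n) (a : Fin n → CompFam D F) : Set X :=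
  {p | ∃ h : ∀ i, p ∈ (a i).dom, RelMap R fun i => (a i).val p (h i)}

/-- The set `⟦φ(a₁, …, aₙ)⟧` for a positive formula `φ`. -/
def posSet {n : ℕ} (φ : PosFormula L Empty n) (a : Fin n → CompFam D F) : Set X :=
  {p | ∃ h : ∀ i, p ∈ (a i).dom,
    PosFormula.Realize φ Empty.elim fun i => (a i).val p (h i)}

/-- The filter product of an ordered system with respect to a filter over the index poset. -/
def FilterProd (D : OrderedSystem L X M) (F : PosetFilter X) : Type (max x w) :=
  Quotient (CompFam.setoid D F)

noncomputable instance FilterProd.structure : L.Structure (FilterProd D F) where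
  funMap {n} g v :=
    Quotient.mk (CompFam.setoid D F) (CompFam.app g fun i => (v i).out)
  RelMap {n} R v :=
    ∃ a : Fin n → CompFam D F,
      (∀ i, Quotient.mk (CompFam.setoid D F) (a i) = v i) ∧ relSet R a ∈ F.sets

/-- `(N, g)` is a direct limit (colimit) cocone of the ordered system `D`. -/
structure IsDirectLimitCocone {X : Type x} [Preorder X] {M : X → Type w}
    [∀ a, L.Structure (M a)] (D : OrderedSystem L X M)
    (N : Type z) [L.Structure N] (g : ∀ a, M a →[L] N) : Prop where
  compat : ∀ ⦃a b : X⦄ (hab : a ≤ b) (m : M a), g b (D.hom hab m) = g a m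
  universal : ∀ (P : Type (max x w z)) [L.Structure P] (h : ∀ a, M a →[L] P),
    (∀ ⦃a b : X⦄ (hab : a ≤ b) (m : M a), h b (D.hom hab m) = h a m) →
    ∃! k : N →[L] P, ∀ (a : X) (m : M a), k (g a m) = h a m

/-- A chain of structures: an ordered system indexed by a nonempty well ordered poset. -/
structure ChainSystem (L : FirstOrder.Language.{u, v}) where
  X : Type w
  [lo : LinearOrder X]
  [ne : Nonempty X]
  wf : WellFoundedLT X
  Mi : X → Type w
  [str : ∀ a, L.Structure (Mi a)]
  sys : OrderedSystem L X Mi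

attribute [instance] ChainSystem.lo ChainSystem.ne ChainSystem.str

/-- An ordered system indexed by a wellfounded forest, together with a prime filter. -/
structure PrimeSystem (L : FirstOrder.Language.{u, v}) where
  X : Type w
  [po : PartialOrder X]
  forest : IsWellFoundedForest X
  Mi : X → Type w
  [str : ∀ a, L.Structure (Mi a)]
  sys : OrderedSystem L X Mi
  F : PosetFilter X
  prime : F.Prime

attribute [instance] PrimeSystem.po PrimeSystem.str

/-- The ultrapower `M^ι/u`. -/
def Ultrapower (M : Type w) (ι : Type z) (u : Ultrafilter ι) :
    Type (max w z) :=
  (↑u : Filter ι).Product fun _ => M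

noncomputable instance Ultrapower.structure (M : Type w) [L.Structure M] (ι : Type z)
    (u : Ultrafilter ι) : L.Structure (Ultrapower M ι u) :=
  inferInstanceAs (L.Structure ((↑u : Filter ι).Product fun _ => M))

/-- A prime power of the structure `N`: a prime product of an ordered system
all of whose structures are `N`. -/
structure PrimePowerOf (L : FirstOrder.Language.{u, v}) (N : Type w) [L.Structure N] where
  X : Type x
  [po : PartialOrder X]
  forest : IsWellFoundedForest X
  sys : OrderedSystem L X fun _ => N
  F : PosetFilter X
  prime : F.Prime

attribute [instance] PrimePowerOf.po

/-- The carrier of a prime power. -/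
def PrimePowerOf.carrier {N : Type w} [L.Structure N] (p : PrimePowerOf L N) :
    Type (max x w) :=
  FilterProd p.sys p.F

noncomputable instance {N : Type w} [L.Structure N] (p : PrimePowerOf L N) :
    L.Structure p.carrier :=
  inferInstanceAs (L.Structure (FilterProd p.sys p.F))

/-- Basic h-inductive sentences: universal closures of implications between
positive formulas. -/
structure BasicHInd (L : FirstOrder.Language.{u, v}) : Type (max u v) where
  n : ℕ
  lhs : PosFormula L Empty n
  rhs : PosFormula L Empty n

/-- Satisfaction of a basic h-inductive sentence. -/
def BasicHInd.Realize (φ : BasicHInd L) (M : Type w) [L.Structure M] : Prop :=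
  ∀ xs : Fin φ.n → M, φ.lhs.Realize Empty.elim xs → φ.rhs.Realize Empty.elim xs

/-- Satisfaction of an h-inductive theory (a set of h-inductive sentences). -/
def ModelsHInd (M : Type w) [L.Structure M] (T : Set (BasicHInd L)) : Prop :=
  ∀ φ ∈ T, φ.Realize M

/-- An immersion: a map preserving and reflecting all positive formulas. -/
def IsImmersion {M : Type w} {N : Type x} [L.Structure M] [L.Structure N]
    (f : N → M) : Prop :=
  ∀ {n : ℕ} (φ : PosFormula L Empty n) (xs : Fin n → N),
    PosFormula.Realize φ Empty.elim xs ↔ PosFormula.Realize φ Empty.elim (f ∘ xs)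

/-- A positively existentially closed model of an h-inductive theory `T`. -/
def IsPec (T : Set (BasicHInd L)) (M : Type w) [L.Structure M] : Prop :=
  ModelsHInd M T ∧ ∀ (P : Type w) [L.Structure P], ModelsHInd P T →
    ∀ f : M →[L] P, IsImmersion (L := L) (⇑f : M → P)

/-- Positive `κ`-saturation. -/
def PositivelySaturatedAt (M : Type w) [L.Structure M] (κ : Cardinal.{w}) : Prop :=
  ∀ (γ : Type w) (vp : γ → M), Cardinal.mk γ < κ →
    ∀ (n : ℕ) (p : Set (PosFormula L γ n)),
      (∀ s : Finset (PosFormula L γ n), ↑s ⊆ p →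
        ∃ xs : Fin n → M, ∀ φ ∈ s, PosFormula.Realize φ vp xs) →
      ∃ xs : Fin n → M, ∀ φ ∈ p, PosFormula.Realize φ vp xs

/-- Positive saturation: positive `|M|`-saturation. -/
def PositivelySaturated (M : Type w) [L.Structure M] : Prop :=
  PositivelySaturatedAt (L := L) M (Cardinal.mk M)


/-- The language with a binary relation `≤` and a constant for each rational. -/
def ratLang : FirstOrder.Language :=
  ⟨fun n => match n with | 0 => ℚ | _ => Empty,
   fun n => match n with | 2 => Unit | _ => Empty⟩

instance : ratLang.Structure ℚ where
  funMap {n} f xs :=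
    match n, f, xs with
    | 0, q, _ => q
  RelMap {n} r xs :=
    match n, r, xs with
    | 2, _, xs => xs 0 ≤ xs 1

theorem ratLang.hom_apply_eq_self (f : ℚ →[ratLang] ℚ) (q : ℚ) : f q = q :=
  f.map_fun (show ratLang.Functions 0 from q) Fin.elim0

def CompFam.map (f : ∀ p, M p → M p)
    (hf : ∀ ⦃p q : X⦄ (hpq : p ≤ q) (m : M p), D.hom hpq (f p m) = f q (D.hom hpq m))
    (a : CompFam D F) : CompFam D F where
  dom := a.dom
  dom_mem := a.dom_mem
  val p hp := f p (a.val p hp)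
  compat b c hb hc hbc := by rw [hf, a.compat]

theorem relSet_upper {n : ℕ} (R : L.Relations n) (a : Fin n → CompFam D F) :
    IsUpperSet (relSet R a) := by
  rintro p q hpq ⟨hp, hR⟩
  refine ⟨fun i => F.upper' _ (a i).dom_mem hpq (hp i), ?_⟩
  convert (D.hom hpq).map_rel R _ hR using 2 with i
  exact ((a i).compat _ _ hpq).symm

theorem FilterProd.relMap_mk_iff {n : ℕ} (R : L.Relations n) (a : Fin n → CompFam D F) :
    RelMap (M := FilterProd D F) R (fun i => ⟦a i⟧) ↔ relSet R a ∈ F.sets := by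
  refine ⟨?_, fun h => ⟨a, fun _ => rfl, h⟩⟩
  rintro ⟨c, hc, hcR⟩
  have heq : ∀ i, eqSet (c i) (a i) ∈ F.sets := fun i => Quotient.exact (hc i)
  refine F.mono' _ (F.inter' _ hcR _ (F.iInter_mem _ heq)) _ (relSet_upper R a) ?_
  rintro p ⟨⟨_, hR⟩, he⟩
  have he := Set.mem_iInter.1 he
  refine ⟨fun i => (he i).2.1, ?_⟩
  convert hR using 2 with i
  exact (he i).2.2.symm

theorem stmt17_general {Y : Type x} [PartialOrder Y]
    (D : OrderedSystem ratLang Y fun _ => ℚ) (F : PosetFilter Y) (hF : ∅ ∉ F.sets) :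
    ¬ ∃ a : FilterProd D F, ∀ b : FilterProd D F,
        Structure.RelMap (L := ratLang) (M := FilterProd D F) (n := 2)
          (show ratLang.Relations 2 from ()) ![b, a] := by
  rintro ⟨a, ha⟩
  obtain ⟨a, rfl⟩ := Quotient.exists_rep (s := CompFam.setoid D F) a
  set a' := CompFam.map (fun _ q => q + 1)
    (fun _ _ _ _ => by simp only [ratLang.hom_apply_eq_self]) a
  have hrel : relSet (show ratLang.Relations 2 from ()) ![a', a] ∈ F.sets := by
    have hvec : (fun i => ⟦![a', a] i⟧ : Fin 2 → FilterProd D F) = ![⟦a'⟧, ⟦a⟧] := by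
      funext i
      fin_cases i <;> rfl
    rw [← FilterProd.relMap_mk_iff, hvec]
    exact ha ⟦a'⟧
  refine hF (Set.eq_empty_of_forall_notMem (fun p hp => ?_) ▸ hrel)
  obtain ⟨h, hle⟩ := hp
  change a.val p (h 1) + 1 ≤ a.val p (h 1) at hle
  linarith

/-- Every nontrivial filter power of the rationals-with-constants has no greatest element. -/
theorem stmt17 {Y : Type x} [PartialOrder Y] (hY : IsWellFoundedForest Y)
    (D : OrderedSystem ratLang Y fun _ => ℚ) (F : PosetFilter Y) (hF : ∅ ∉ F.sets) :
    ¬ ∃ a : FilterProd D F, ∀ b : FilterProd D F,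
        Structure.RelMap (L := ratLang) (M := FilterProd D F) (n := 2)
          (show ratLang.Relations 2 from ()) ![b, a] :=
  stmt17_general D F hF

end PosLogic
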